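/- arXiv:1907.01433 — 2 statements merged into one kernel-verified Lean document; each statement's English description precedes it below -/
import Mathlib

section
/- Let d ≥ 1 be an integer, k ∈ {0,…,d−1}, z ≥ 1 a real number, and ε ∈ (0, 1/(2^{z+1}+2)]. Let P be a finite nonempty set of points in ℝ^d, set ψ = (ε/z)^z, r = 1 + max_{q∈P} D_z(q, 0_d)/(ψ·ε²), and e_{d+1} = (0,…,0,1) ∈ ℝ^{d+1}. Let p ∈ P with lifted point p' = (p | r) ∈ ℝ^{d+1}. Let S be a nonempty affine k-subspace of ℝ^d with D_z(0_d, S) ≥ ε·r, let S'' = {(x | r) : x ∈ S} ⊆ ℝ^{d+1}, and let S' be the linear span of S'' in ℝ^{d+1}. Then |D_z(r·e_{d+1}, S') − D_z(p', S')| ≤ (2^z + 1)·ε·D_z(r·e_{d+1}, S'). -/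
/-!
Write `A` and `B` for the distances of `r • e = (0 | r)` and of `p' = (p | r)` to `S'`.
Every point of `S'` is `(t • s₀ + w | t * r)` with `s₀ ∈ S` and `w` in the direction of `S`, whose
first block has norm at least `|t| · dist(0, S)`; hence `A ≥ min (dist(0, S), r) / √2`, and so
`ε r ≤ (√2 A)^z`. On the other hand the choice of `r` gives `‖p‖^z ≤ (ε/z)^z ε² r`, so that
`|B - A| ≤ dist(p', r • e) = ‖p‖ ≤ (√2 ε / z) A`. Raising to the power `z` costs at most a factor
`2^z - 1`, by Bernoulli's inequality on one side and convexity of `x ↦ x^z` on the other.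
-/

/-- `(q | r) ∈ ℝ^{d+1}`: the point `q ∈ ℝ^d` with the coordinate `r` appended. -/
noncomputable def lift {d : ℕ} (q : EuclideanSpace ℝ (Fin d)) (r : ℝ) :
    EuclideanSpace ℝ (Fin (d + 1)) :=
  WithLp.toLp 2 (Fin.snoc (WithLp.ofLp q) r)

open Metric Set

section Lift

variable {d : ℕ}

lemma lift_castSucc (q : EuclideanSpace ℝ (Fin d)) (r : ℝ) (i : Fin d) :
    lift q r i.castSucc = q i := by
  simp [lift]

lemma lift_last (q : EuclideanSpace ℝ (Fin d)) (r : ℝ) : lift q r (Fin.last d) = r := by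
  simp [lift]

lemma lift_zero : lift (0 : EuclideanSpace ℝ (Fin d)) 0 = 0 := by
  ext i
  induction i using Fin.lastCases <;> simp [lift_last, lift_castSucc]

lemma lift_add (a a' : EuclideanSpace ℝ (Fin d)) (b b' : ℝ) :
    lift a b + lift a' b' = lift (a + a') (b + b') := by
  ext i
  induction i using Fin.lastCases <;> simp [lift_last, lift_castSucc]

lemma lift_smul (c : ℝ) (a : EuclideanSpace ℝ (Fin d)) (b : ℝ) :
    c • lift a b = lift (c • a) (c * b) := by
  ext i
  induction i using Fin.lastCases <;> simp [lift_last, lift_castSucc]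

lemma dist_lift (a a' : EuclideanSpace ℝ (Fin d)) (b b' : ℝ) :
    dist (lift a b) (lift a' b') = √(dist a a' ^ 2 + (b - b') ^ 2) := by
  rw [EuclideanSpace.dist_eq, EuclideanSpace.dist_eq, Fin.sum_univ_castSucc,
    Real.sq_sqrt (by positivity)]
  simp only [lift_castSucc, lift_last, Real.dist_eq, sq_abs]

lemma dist_lift_lift_same (a a' : EuclideanSpace ℝ (Fin d)) (b : ℝ) :
    dist (lift a b) (lift a' b) = dist a a' := by
  rw [dist_lift, sub_self, zero_pow two_ne_zero, add_zero, Real.sqrt_sq dist_nonneg]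

lemma abs_infDist_lift_sub_infDist_lift_le (s : Set (EuclideanSpace ℝ (Fin (d + 1))))
    (a b : EuclideanSpace ℝ (Fin d)) (r : ℝ) :
    |infDist (lift a r) s - infDist (lift b r) s| ≤ dist a b := by
  rw [← Real.dist_eq, ← dist_lift_lift_same a b r]
  simpa using (lipschitz_infDist_pt s).dist_le_mul (lift a r) (lift b r)

lemma exists_eq_lift_of_mem_span_lift {S : AffineSubspace ℝ (EuclideanSpace ℝ (Fin d))}
    {s₀ : EuclideanSpace ℝ (Fin d)} (hs₀ : s₀ ∈ S) {r : ℝ} {y : EuclideanSpace ℝ (Fin (d + 1))}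
    (hy : y ∈ Submodule.span ℝ ((lift · r) '' (S : Set (EuclideanSpace ℝ (Fin d))))) :
    ∃ t : ℝ, ∃ w ∈ S.direction, y = lift (t • s₀ + w) (t * r) := by
  induction hy using Submodule.span_induction with
  | mem x hx =>
    obtain ⟨q, hq, rfl⟩ := hx
    exact ⟨1, q - s₀, AffineSubspace.vsub_mem_direction hq hs₀, by simp⟩
  | zero => exact ⟨0, 0, S.direction.zero_mem, by simp [lift_zero]⟩
  | add x x' _ _ ihx ihx' =>
    obtain ⟨t, w, hw, rfl⟩ := ihx
    obtain ⟨t', w', hw', rfl⟩ := ihx'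
    refine ⟨t + t', w + w', S.direction.add_mem hw hw', ?_⟩
    rw [lift_add, add_mul]
    congr 1
    module
  | smul c x _ ihx =>
    obtain ⟨t, w, hw, rfl⟩ := ihx
    refine ⟨c * t, c • w, S.direction.smul_mem c hw, ?_⟩
    rw [lift_smul, smul_add, smul_smul, mul_assoc]

end Lift

lemma abs_mul_infDist_le_norm_smul_add {E : Type*} [NormedAddCommGroup E] [NormedSpace ℝ E]
    {S : AffineSubspace ℝ E} {s₀ w : E} (hs₀ : s₀ ∈ S) (hw : w ∈ S.direction) (t : ℝ) :
    |t| * infDist 0 (S : Set E) ≤ ‖t • s₀ + w‖ := by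
  rcases eq_or_ne t 0 with rfl | ht
  · simp
  have hmem : t⁻¹ • w + s₀ ∈ S :=
    AffineSubspace.vadd_mem_of_mem_direction (S.direction.smul_mem _ hw) hs₀
  calc |t| * infDist 0 (S : Set E) ≤ |t| * ‖t⁻¹ • w + s₀‖ := by
        gcongr
        simpa using infDist_le_dist_of_mem (x := (0 : E)) hmem
    _ = ‖t • s₀ + w‖ := by
        rw [← Real.norm_eq_abs, ← norm_smul, smul_add, smul_smul, mul_inv_cancel₀ ht, one_smul,
          add_comm]

lemma sq_div_two_le_sq_add_sq_of_le {m D r : ℝ} (hm : 0 ≤ m) (hD : m ≤ D) (hr : m ≤ r) (t : ℝ) :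
    m ^ 2 / 2 ≤ (t * D) ^ 2 + ((1 - t) * r) ^ 2 := by
  calc m ^ 2 / 2 ≤ (t * m) ^ 2 + ((1 - t) * m) ^ 2 := by nlinarith [sq_nonneg (2 * t - 1)]
    _ ≤ (t * D) ^ 2 + ((1 - t) * r) ^ 2 := by
        simp only [mul_pow]
        gcongr

lemma min_infDist_le_sqrt_two_mul_infDist_span_lift {d : ℕ}
    {S : AffineSubspace ℝ (EuclideanSpace ℝ (Fin d))}
    (hS : (S : Set (EuclideanSpace ℝ (Fin d))).Nonempty) {r : ℝ} (hr : 0 ≤ r) :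
    min (infDist 0 (S : Set (EuclideanSpace ℝ (Fin d)))) r ≤
      √2 * infDist (lift 0 r)
        (Submodule.span ℝ ((lift · r) '' (S : Set (EuclideanSpace ℝ (Fin d)))) :
          Set (EuclideanSpace ℝ (Fin (d + 1)))) := by
  obtain ⟨s₀, hs₀⟩ := hS
  set m := min (infDist 0 (S : Set (EuclideanSpace ℝ (Fin d)))) r
  have hm : 0 ≤ m := le_min infDist_nonneg hr
  rw [← div_le_iff₀' (by positivity), le_infDist ⟨0, Submodule.zero_mem _⟩]
  intro y hy
  obtain ⟨t, w, hw, rfl⟩ := exists_eq_lift_of_mem_span_lift hs₀ hy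
  rw [dist_lift, dist_zero_left]
  refine Real.le_sqrt_of_sq_le ?_
  have hnorm := abs_mul_infDist_le_norm_smul_add hs₀ hw t
  calc (m / √2) ^ 2 = m ^ 2 / 2 := by rw [div_pow, Real.sq_sqrt zero_le_two]
    _ ≤ (t * infDist 0 (S : Set (EuclideanSpace ℝ (Fin d)))) ^ 2 + ((1 - t) * r) ^ 2 :=
        sq_div_two_le_sq_add_sq_of_le hm (min_le_left _ _) (min_le_right _ _) t
    _ ≤ ‖t • s₀ + w‖ ^ 2 + (r - t * r) ^ 2 := by
        have hsq := pow_le_pow_left₀ (mul_nonneg (abs_nonneg t) infDist_nonneg) hnorm 2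
        rw [mul_pow, sq_abs] at hsq
        linarith [mul_pow t (infDist 0 (S : Set (EuclideanSpace ℝ (Fin d)))) 2]

lemma mul_le_rpow_sqrt_two_mul_infDist_span_lift {d : ℕ}
    {S : AffineSubspace ℝ (EuclideanSpace ℝ (Fin d))}
    (hS : (S : Set (EuclideanSpace ℝ (Fin d))).Nonempty) {ε r z : ℝ} (hε : ε ≤ 1) (hr : 1 ≤ r)
    (hz : 1 ≤ z) (hfar : ε * r ≤ infDist 0 (S : Set (EuclideanSpace ℝ (Fin d))) ^ z) :
    ε * r ≤ (√2 * infDist (lift 0 r)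
        (Submodule.span ℝ ((lift · r) '' (S : Set (EuclideanSpace ℝ (Fin d)))) :
          Set (EuclideanSpace ℝ (Fin (d + 1))))) ^ z := by
  have hr0 : 0 ≤ r := zero_le_one.trans hr
  calc ε * r ≤ min (infDist 0 (S : Set (EuclideanSpace ℝ (Fin d)))) r ^ z := by
        rcases min_choice (infDist 0 (S : Set (EuclideanSpace ℝ (Fin d)))) r with h | h <;> rw [h]
        · exact hfar
        · exact (mul_le_of_le_one_left hr0 hε).trans (Real.self_le_rpow_of_one_le hr hz)
    _ ≤ _ := Real.rpow_le_rpow (le_min infDist_nonneg hr0)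
        (min_infDist_le_sqrt_two_mul_infDist_span_lift hS hr0) (zero_le_one.trans hz)

lemma one_add_le_two_rpow {z : ℝ} (hz : 1 ≤ z) : 1 + z ≤ (2 : ℝ) ^ z := by
  simpa [one_add_one_eq_two] using one_add_mul_self_le_rpow_one_add (s := 1) (by norm_num) hz

lemma one_sub_mul_le_one_sub_rpow {z x : ℝ} (hz : 1 ≤ z) (hx0 : 0 ≤ x) (hx1 : x ≤ 1) :
    1 - (2 ^ z - 1) * x ≤ (1 - x) ^ z := by
  have hbern := one_add_mul_self_le_rpow_one_add (neg_le_neg hx1) hz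
  have hz2 := mul_le_mul_of_nonneg_right (one_add_le_two_rpow hz) hx0
  rw [← sub_eq_add_neg] at hbern
  linarith

lemma one_add_rpow_le_of_le_one {z x : ℝ} (hz : 1 ≤ z) (hx0 : 0 ≤ x) (hx1 : x ≤ 1) :
    (1 + x) ^ z ≤ 1 + (2 ^ z - 1) * x := by
  have hc := (convexOn_rpow hz).2 (mem_Ici.2 zero_le_one) (mem_Ici.2 zero_le_two)
    (sub_nonneg.2 hx1) hx0 (sub_add_cancel 1 x)
  simp only [smul_eq_mul, Real.one_rpow] at hc
  calc (1 + x) ^ z = ((1 - x) * 1 + x * 2) ^ z := by ring_nf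
    _ ≤ 1 + (2 ^ z - 1) * x := by linarith

lemma abs_rpow_sub_rpow_le {a b η z : ℝ} (ha : 0 ≤ a) (hη0 : 0 ≤ η) (hη1 : η ≤ 1) (hz : 1 ≤ z)
    (hab : |b - a| ≤ η * a) : |b ^ z - a ^ z| ≤ (2 ^ z - 1) * η * a ^ z := by
  obtain ⟨hba, hab⟩ := abs_sub_le_iff.1 hab
  have hz0 : 0 ≤ z := zero_le_one.trans hz
  have haz : 0 ≤ a ^ z := Real.rpow_nonneg ha z
  have hupper : b ^ z ≤ (1 + η) ^ z * a ^ z := by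
    rw [← Real.mul_rpow (by linarith) ha]
    exact Real.rpow_le_rpow (by nlinarith) (by linarith) hz0
  have hlower : (1 - η) ^ z * a ^ z ≤ b ^ z := by
    rw [← Real.mul_rpow (by linarith) ha]
    exact Real.rpow_le_rpow (mul_nonneg (by linarith) ha) (by linarith) hz0
  have hconvex := mul_le_mul_of_nonneg_right (one_add_rpow_le_of_le_one hz hη0 hη1) haz
  have hbernoulli := mul_le_mul_of_nonneg_right (one_sub_mul_le_one_sub_rpow hz hη0 hη1) haz
  rw [abs_sub_le_iff]
  constructor <;> linarith

lemma sqrt_two_mul_two_rpow_sub_one_le {z : ℝ} (hz : 1 ≤ z) :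
    √2 * (2 ^ z - 1) ≤ z * (2 ^ z + 1) := by
  have hsq : √2 ^ 2 = 2 := Real.sq_sqrt zero_le_two
  have hsqrt : √2 ≤ 3 / 2 := by nlinarith [Real.sqrt_nonneg 2]
  have h2z : 2 ≤ (2 : ℝ) ^ z := by linarith [one_add_le_two_rpow hz]
  rcases le_total √2 z with h | h
  · nlinarith
  · have hle : (2 : ℝ) ^ z ≤ 2 * √2 := by
      calc (2 : ℝ) ^ z ≤ 2 ^ (1 + 1 / 2 : ℝ) :=
            Real.rpow_le_rpow_of_exponent_le one_le_two (by linarith)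
        _ = 2 * √2 := by rw [Real.rpow_add two_pos, Real.rpow_one, Real.sqrt_eq_rpow]
    nlinarith [Real.sqrt_nonneg 2]

lemma two_rpow_sub_one_mul_sqrt_two_mul_div_le {z ε : ℝ} (hz : 1 ≤ z) (hε : 0 ≤ ε) :
    (2 ^ z - 1) * (√2 * ε / z) ≤ (2 ^ z + 1) * ε :=
  calc (2 ^ z - 1) * (√2 * ε / z) = √2 * (2 ^ z - 1) * ε / z := by ring
    _ ≤ z * (2 ^ z + 1) * ε / z := by gcongr ?_ * _ / _; exact sqrt_two_mul_two_rpow_sub_one_le hz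
    _ = (2 ^ z + 1) * ε := by field_simp

theorem stmt4_general (d : ℕ)
    (z ε : ℝ) (hz : 1 ≤ z) (hε : ε ∈ Set.Ioc (0 : ℝ) (1 / (2 ^ (z + 1) + 2)))
    (P : Finset (EuclideanSpace ℝ (Fin d))) (hP : P.Nonempty)
    (p : EuclideanSpace ℝ (Fin d)) (hp : p ∈ P)
    (ψ r : ℝ) (hψ : ψ = (ε / z) ^ z)
    (hr : r = 1 + P.sup' hP fun q => dist q 0 ^ z / (ψ * ε ^ 2))
    (S : AffineSubspace ℝ (EuclideanSpace ℝ (Fin d)))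
    (hS : (S : Set (EuclideanSpace ℝ (Fin d))).Nonempty)
    (hfar : ε * r ≤ Metric.infDist 0 (S : Set (EuclideanSpace ℝ (Fin d))) ^ z)
    (p' : EuclideanSpace ℝ (Fin (d + 1))) (hp' : p' = lift p r)
    (e : EuclideanSpace ℝ (Fin (d + 1))) (he : e = lift 0 1)
    (S' : Submodule ℝ (EuclideanSpace ℝ (Fin (d + 1))))
    (hS' : S' = Submodule.span ℝ
      ((fun x => lift x r) '' (S : Set (EuclideanSpace ℝ (Fin d))))) :
    |Metric.infDist (r • e) (S' : Set (EuclideanSpace ℝ (Fin (d + 1)))) ^ z -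
        Metric.infDist p' (S' : Set (EuclideanSpace ℝ (Fin (d + 1)))) ^ z| ≤
      (2 ^ z + 1) * ε * Metric.infDist (r • e) (S' : Set (EuclideanSpace ℝ (Fin (d + 1)))) ^ z := by
  obtain ⟨hε0, hεle⟩ := hε
  subst hp' he hψ
  rw [lift_smul, smul_zero, mul_one]
  set A := infDist (lift 0 r) (S' : Set (EuclideanSpace ℝ (Fin (d + 1))))
  have hA0 : 0 ≤ A := infDist_nonneg
  have hz0 : 0 < z := zero_lt_one.trans_le hz
  have hε1 : ε ≤ 1 / 5 := hεle.trans <| by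
    gcongr
    linarith [one_add_le_two_rpow (by linarith : (1 : ℝ) ≤ z + 1)]
  have hp_le : dist p 0 ^ z ≤ (ε / z) ^ z * ε ^ 2 * (r - 1) := by
    rw [hr, add_sub_cancel_left, ← div_le_iff₀' (by positivity)]
    exact Finset.le_sup' (fun q => dist q 0 ^ z / ((ε / z) ^ z * ε ^ 2)) hp
  have hr1 : 1 ≤ r := by
    have : 0 < (ε / z) ^ z * ε ^ 2 := by positivity
    nlinarith [Real.rpow_nonneg (dist_nonneg (x := p) (y := 0)) z]
  have hA : ε * r ≤ (√2 * A) ^ z := by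
    have := mul_le_rpow_sqrt_two_mul_infDist_span_lift hS (by linarith) hr1 hz hfar
    rwa [← hS'] at this
  set η := √2 * ε / z
  have hpA : dist p 0 ≤ η * A := by
    rw [← Real.rpow_le_rpow_iff dist_nonneg (by positivity) hz0,
      show η * A = ε / z * (√2 * A) by ring, Real.mul_rpow (by positivity) (by positivity)]
    calc dist p 0 ^ z ≤ (ε / z) ^ z * ε ^ 2 * (r - 1) := hp_le
      _ ≤ (ε / z) ^ z * (ε * r) := by
          rw [mul_assoc]
          gcongr (ε / z) ^ z * ?_
          nlinarith [mul_nonneg (mul_nonneg hε0.le (by linarith : (0 : ℝ) ≤ r))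
            (by linarith : 0 ≤ 1 - ε)]
      _ ≤ (ε / z) ^ z * (√2 * A) ^ z := by gcongr
  have hBA := (abs_infDist_lift_sub_infDist_lift_le (S' : Set _) p 0 r).trans hpA
  have hη1 : η ≤ 1 :=
    calc η ≤ √2 * ε := div_le_self (by positivity) hz
      _ ≤ 2 * (1 / 5) := by gcongr; nlinarith [Real.sq_sqrt zero_le_two, Real.sqrt_nonneg 2]
      _ ≤ 1 := by norm_num
  rw [abs_sub_comm]
  exact (abs_rpow_sub_rpow_le hA0 (by positivity) hη1 hz hBA).trans
    (mul_le_mul_of_nonneg_right (two_rpow_sub_one_mul_sqrt_two_mul_div_le hz hε0.le)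
      (Real.rpow_nonneg hA0 z))

/-- With `z ≥ 1`, `ε ∈ (0, 1/(2^{z+1}+2)]`, `ψ = (ε/z)^z`,
`r = 1 + max_{q∈P} dist(q,0)^z/(ψε²)`, `e_{d+1} = (0,…,0,1)`, `p ∈ P`, `p' = (p | r)`:
if `S` is a nonempty affine `k`-subspace of `ℝ^d` with `D_z(0,S) ≥ εr`,
`S'' = {(x|r) : x ∈ S}` and `S'` is the linear span of `S''` in `ℝ^{d+1}`, then
`|D_z(r·e_{d+1},S') − D_z(p',S')| ≤ (2^z+1)·ε·D_z(r·e_{d+1},S')`. -/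
theorem stmt4 (d k : ℕ) (hd : 1 ≤ d) (hk : k ≤ d - 1)
    (z ε : ℝ) (hz : 1 ≤ z) (hε : ε ∈ Set.Ioc (0 : ℝ) (1 / (2 ^ (z + 1) + 2)))
    (P : Finset (EuclideanSpace ℝ (Fin d))) (hP : P.Nonempty)
    (p : EuclideanSpace ℝ (Fin d)) (hp : p ∈ P)
    (ψ r : ℝ) (hψ : ψ = (ε / z) ^ z)
    (hr : r = 1 + P.sup' hP fun q => dist q 0 ^ z / (ψ * ε ^ 2))
    (S : AffineSubspace ℝ (EuclideanSpace ℝ (Fin d)))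
    (hS : (S : Set (EuclideanSpace ℝ (Fin d))).Nonempty)
    (hdim : Module.finrank ℝ S.direction = k)
    (hfar : ε * r ≤ Metric.infDist 0 (S : Set (EuclideanSpace ℝ (Fin d))) ^ z)
    (p' : EuclideanSpace ℝ (Fin (d + 1))) (hp' : p' = lift p r)
    (e : EuclideanSpace ℝ (Fin (d + 1))) (he : e = lift 0 1)
    (S' : Submodule ℝ (EuclideanSpace ℝ (Fin (d + 1))))
    (hS' : S' = Submodule.span ℝ
      ((fun x => lift x r) '' (S : Set (EuclideanSpace ℝ (Fin d))))) :
    |Metric.infDist (r • e) (S' : Set (EuclideanSpace ℝ (Fin (d + 1)))) ^ z -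
        Metric.infDist p' (S' : Set (EuclideanSpace ℝ (Fin (d + 1)))) ^ z| ≤
      (2 ^ z + 1) * ε * Metric.infDist (r • e) (S' : Set (EuclideanSpace ℝ (Fin (d + 1)))) ^ z :=
  stmt4_general d z ε hz hε P hP p hp ψ r hψ hr S hS hfar p' hp' e he S' hS'
end

section
/- Let d ≥ 1 be an integer, k ∈ {0,…,d−1}, z ≥ 1 a real number, and ε ∈ (0, 1/(2^{z+1}+2)]. Let (P,w) be a weighted set of n ≥ 1 points in ℝ^d with Σ_{q∈P} w(q) > 0, set ψ = (ε/z)^z and r = 1 + max_{q∈P} D_z(q, 0_d)/(ψ·ε²), and write c₁ = 2^z + 1. Let Q₀ denote the set of nonempty affine k-subspaces S of ℝ^d with D_z(0_d, S) ≥ ε·r. Then for every p ∈ P, ((1−c₁ε)/(1+c₁ε))·w(p)/Σ_{q∈P} w(q) ≤ sup_{S∈Q₀} [ w(p)·D_z(p,S) / Σ_{q∈P} w(q)·D_z(q,S) ] ≤ ((1+c₁ε)/(1−c₁ε))·w(p)/Σ_{q∈P} w(q), where the supremum is taken over those S ∈ Q₀ with Σ_{q∈P} w(q)·D_z(q,S)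 > 0. -/
/-!
If `D_z(0,S) ≥ εr`, every `q ∈ P` satisfies `‖q‖^z ≤ ψε²(r-1) ≤ ψ·D_z(0,S)`, i.e.
`‖q‖ ≤ (ε/z)·dist(0,S)`. By the triangle inequality `dist(q,S)` is then `dist(0,S)` up to a
factor `1 ± ε/z`, and Bernoulli's inequality together with the convexity of `t ↦ t^z` give
`D_z(q,S) = (1 ± c₁ε)·D_z(0,S)` for all `q ∈ P` at once. The common factor `D_z(0,S)` cancels
in the ratio, which therefore lies between the two bounds for every admissible `S`. Admissible
subspaces of every dimension `k < d` exist: push a `k`-dimensional linear subspace far away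
along a unit vector orthogonal to it.
-/

open Metric Module Set

theorem one_add_rpow_le {z t : ℝ} (hz : 1 ≤ z) (ht : t ∈ Icc (0 : ℝ) 1) :
    (1 + t) ^ z ≤ 1 + (2 ^ z - 1) * t := by
  have h := (convexOn_rpow hz).2 (mem_Ici.2 zero_le_one) (mem_Ici.2 zero_le_two)
    (sub_nonneg.2 ht.2) ht.1 (sub_add_cancel 1 t)
  simp only [smul_eq_mul, Real.one_rpow] at h
  calc (1 + t) ^ z = ((1 - t) * 1 + t * 2) ^ z := by ring_nf
    _ ≤ _ := h
    _ = _ := by ring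

theorem two_rpow_add_one_mul_le_half {z ε : ℝ} (hε : ε ≤ 1 / (2 ^ (z + 1) + 2)) :
    (2 ^ z + 1) * ε ≤ 1 / 2 := by
  rw [Real.rpow_add_one two_ne_zero, show (2 : ℝ) ^ z * 2 + 2 = 2 * (2 ^ z + 1) by ring,
    le_div_iff₀ (by positivity)] at hε
  rw [le_div_iff₀ two_pos]
  linarith

theorem le_div_mul_of_rpow_div_le {a ℓ ε z r : ℝ} (ha : 0 ≤ a) (hℓ : 0 ≤ ℓ) (hz : 0 < z)
    (hε : ε ∈ Ioc 0 1) (har : a ^ z / ((ε / z) ^ z * ε ^ 2) ≤ r - 1) (hfar : ε * r ≤ ℓ ^ z) :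
    a ≤ ε / z * ℓ := by
  have hεz : 0 < ε / z := div_pos hε.1 hz
  have hψ : 0 < (ε / z) ^ z := Real.rpow_pos_of_pos hεz z
  have hℓz : 0 ≤ ℓ ^ z := Real.rpow_nonneg hℓ z
  rw [div_le_iff₀ (mul_pos hψ (pow_pos hε.1 2))] at har
  rw [← Real.rpow_le_rpow_iff ha (mul_nonneg hεz.le hℓ) hz, Real.mul_rpow hεz.le hℓ]
  have hfar' : ε * (ε * r - ε) ≤ ℓ ^ z := by nlinarith [hε.1, hε.2]
  calc a ^ z ≤ (ε / z) ^ z * (ε * (ε * r - ε)) := by linarith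
    _ ≤ (ε / z) ^ z * ℓ ^ z := mul_le_mul_of_nonneg_left hfar' hψ.le

theorem abs_infDist_rpow_sub_le {α : Type*} [PseudoMetricSpace α] {s : Set α} {x y : α}
    {z δ : ℝ} (hz : 1 ≤ z) (hδ : δ ∈ Icc (0 : ℝ) 1) (hxy : dist y x ≤ δ * infDist x s) :
    |infDist y s ^ z - infDist x s ^ z| ≤ (2 ^ z - 1) * δ * infDist x s ^ z := by
  have hz0 : 0 ≤ z := zero_le_one.trans hz
  have hℓ : 0 ≤ infDist x s := infDist_nonneg
  have hlo : infDist x s * (1 - δ) ≤ infDist y s := by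
    linarith [infDist_le_infDist_add_dist (x := x) (y := y) (s := s), dist_comm x y]
  have hhi : infDist y s ≤ infDist x s * (1 + δ) := by
    linarith [infDist_le_infDist_add_dist (x := y) (y := x) (s := s)]
  have hbern : 1 - z * δ ≤ (1 - δ) ^ z := by
    simpa [sub_eq_add_neg] using
      one_add_mul_self_le_rpow_one_add (s := -δ) (by linarith [hδ.2]) hz
  -- the lower deviation `zδ` is dominated by the upper one `(2^z - 1)δ`
  have hz2 : 1 + z ≤ 2 ^ z := by
    simpa [one_add_one_eq_two] using one_add_mul_self_le_rpow_one_add (s := 1) (by norm_num) hz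
  have hpow_lo : infDist x s ^ z * (1 - δ) ^ z ≤ infDist y s ^ z := by
    rw [← Real.mul_rpow hℓ (sub_nonneg.2 hδ.2)]
    exact Real.rpow_le_rpow (mul_nonneg hℓ (sub_nonneg.2 hδ.2)) hlo hz0
  have hpow_hi : infDist y s ^ z ≤ infDist x s ^ z * (1 + δ) ^ z := by
    rw [← Real.mul_rpow hℓ (by linarith [hδ.1])]
    exact Real.rpow_le_rpow infDist_nonneg hhi hz0
  have hL : 0 ≤ infDist x s ^ z := Real.rpow_nonneg hℓ z
  have hconv := mul_le_mul_of_nonneg_left (one_add_rpow_le hz hδ) hL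
  have hbern' := mul_le_mul_of_nonneg_left hbern hL
  rw [abs_sub_le_iff]
  constructor <;> nlinarith [hδ.1]

theorem infDist_rpow_mem_Icc_of_far {α : Type*} [PseudoMetricSpace α] {s : Set α} {x q : α}
    {z ε r : ℝ} (hz : 1 ≤ z) (hε : ε ∈ Ioc 0 1)
    (hq : dist q x ^ z / ((ε / z) ^ z * ε ^ 2) ≤ r - 1) (hfar : ε * r ≤ infDist x s ^ z) :
    infDist q s ^ z ∈
      Icc (infDist x s ^ z * (1 - (2 ^ z + 1) * ε)) (infDist x s ^ z * (1 + (2 ^ z + 1) * ε)) := by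
  have hz0 : 0 < z := zero_lt_one.trans_le hz
  have hδ : ε / z ∈ Icc (0 : ℝ) 1 :=
    ⟨div_nonneg hε.1.le hz0.le, div_le_one_of_le₀ (hε.2.trans hz) hz0.le⟩
  have habs := abs_infDist_rpow_sub_le hz hδ
    (le_div_mul_of_rpow_div_le dist_nonneg infDist_nonneg hz0 hε hq hfar)
  have hcoef : (2 ^ z - 1) * (ε / z) ≤ (2 ^ z + 1) * ε := by
    have : ε / z ≤ ε := div_le_self hε.1.le hz
    nlinarith [Real.one_le_rpow one_le_two hz0.le, hδ.1]
  have hL : 0 ≤ infDist x s ^ z := Real.rpow_nonneg infDist_nonneg z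
  rw [abs_sub_le_iff] at habs
  constructor <;> nlinarith [mul_le_mul_of_nonneg_right hcoef hL]

section WeightedShare

variable {ι : Type*} {s : Finset ι} {w f : ι → ℝ} {m M : ℝ} {p : ι}

theorem sum_mul_mem_Icc (hw : ∀ i ∈ s, 0 ≤ w i) (hf : ∀ i ∈ s, f i ∈ Icc m M) :
    ∑ i ∈ s, w i * f i ∈ Icc ((∑ i ∈ s, w i) * m) ((∑ i ∈ s, w i) * M) := by
  rw [Finset.sum_mul, Finset.sum_mul]
  exact ⟨Finset.sum_le_sum fun i hi => mul_le_mul_of_nonneg_left (hf i hi).1 (hw i hi),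
    Finset.sum_le_sum fun i hi => mul_le_mul_of_nonneg_left (hf i hi).2 (hw i hi)⟩

theorem mul_div_sum_mul_le (hw : ∀ i ∈ s, 0 ≤ w i) (hW : 0 < ∑ i ∈ s, w i) (hm : 0 < m)
    (hf : ∀ i ∈ s, f i ∈ Icc m M) (hp : p ∈ s) :
    w p * f p / ∑ i ∈ s, w i * f i ≤ M / m * (w p / ∑ i ∈ s, w i) := by
  calc w p * f p / ∑ i ∈ s, w i * f i ≤ w p * M / ((∑ i ∈ s, w i) * m) :=
        div_le_div₀ (mul_nonneg (hw p hp) (hm.le.trans ((hf p hp).1.trans (hf p hp).2)))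
          (mul_le_mul_of_nonneg_left (hf p hp).2 (hw p hp)) (mul_pos hW hm)
          (sum_mul_mem_Icc hw hf).1
    _ = M / m * (w p / ∑ i ∈ s, w i) := by field_simp

theorem div_mul_le_mul_div_sum_mul (hw : ∀ i ∈ s, 0 ≤ w i) (hW : 0 < ∑ i ∈ s, w i)
    (hm : 0 < m) (hf : ∀ i ∈ s, f i ∈ Icc m M) (hp : p ∈ s) :
    m / M * (w p / ∑ i ∈ s, w i) ≤ w p * f p / ∑ i ∈ s, w i * f i := by
  have hM : 0 < M := hm.trans_le ((hf p hp).1.trans (hf p hp).2)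
  calc m / M * (w p / ∑ i ∈ s, w i) = w p * m / ((∑ i ∈ s, w i) * M) := by field_simp
    _ ≤ w p * f p / ∑ i ∈ s, w i * f i :=
        div_le_div₀ (mul_nonneg (hw p hp) (hm.le.trans (hf p hp).1))
          (mul_le_mul_of_nonneg_left (hf p hp).1 (hw p hp))
          (mul_pos hW hm |>.trans_le (sum_mul_mem_Icc hw hf).1) (sum_mul_mem_Icc hw hf).2

theorem mul_div_sum_mul_mem_Icc {L c : ℝ} (hw : ∀ i ∈ s, 0 ≤ w i) (hW : 0 < ∑ i ∈ s, w i)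
    (hL : 0 < L) (hc : c < 1) (hf : ∀ i ∈ s, f i ∈ Icc (L * (1 - c)) (L * (1 + c)))
    (hp : p ∈ s) :
    w p * f p / ∑ i ∈ s, w i * f i ∈
      Icc ((1 - c) / (1 + c) * (w p / ∑ i ∈ s, w i))
        ((1 + c) / (1 - c) * (w p / ∑ i ∈ s, w i)) := by
  have hm : 0 < L * (1 - c) := mul_pos hL (sub_pos.2 hc)
  have hlo := div_mul_le_mul_div_sum_mul hw hW hm hf hp
  have hhi := mul_div_sum_mul_le hw hW hm hf hp
  rw [mul_div_mul_left _ _ hL.ne'] at hlo hhi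
  exact ⟨hlo, hhi⟩

end WeightedShare

theorem exists_affineSubspace_finrank_eq_le_infDist {E : Type*} [NormedAddCommGroup E]
    [InnerProductSpace ℝ E] [FiniteDimensional ℝ E] {k : ℕ} (hk : k < finrank ℝ E)
    (x : E) (R : ℝ) :
    ∃ S : AffineSubspace ℝ E, (S : Set E).Nonempty ∧ finrank ℝ S.direction = k ∧
      R ≤ infDist x S := by
  obtain ⟨f, hf⟩ := exists_linearIndependent_of_le_finrank hk.le
  set W := Submodule.span ℝ (range f)
  have hW : finrank ℝ W = k := by rw [finrank_span_eq_card hf, Fintype.card_fin]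
  have hWtop : W ≠ ⊤ := fun h => by
    rw [h, finrank_top] at hW
    omega
  obtain ⟨v, hv, hv0⟩ := Submodule.exists_mem_ne_zero_of_ne_bot
    (mt Submodule.orthogonal_eq_bot_iff.1 hWtop)
  set u := (‖v‖⁻¹ : ℝ) • v
  have hu : ‖u‖ = 1 := norm_smul_inv_norm hv0
  have huW : u ∈ Wᗮ := Wᗮ.smul_mem _ hv
  refine ⟨AffineSubspace.mk' (x + R • u) W, ⟨_, AffineSubspace.self_mem_mk' _ _⟩,
    by rwa [AffineSubspace.direction_mk'],
    (le_infDist ⟨_, AffineSubspace.self_mem_mk' _ _⟩).2 fun y hy => ?_⟩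
  have horth : inner ℝ (y - (x + R • u)) u = 0 :=
    Submodule.inner_right_of_mem_orthogonal (AffineSubspace.mem_mk'.1 hy) huW
  have hinner : inner ℝ (y - x) u = R := by
    rw [show y - x = (y - (x + R • u)) + R • u by abel, inner_add_left, horth,
      real_inner_smul_left, real_inner_self_eq_norm_sq, hu]
    ring
  calc R = inner ℝ (y - x) u := hinner.symm
    _ ≤ ‖y - x‖ * ‖u‖ := real_inner_le_norm _ _
    _ = dist x y := by rw [hu, mul_one, dist_comm, dist_eq_norm]

theorem csSup_mem_Icc_of_subset {β : Type*} [ConditionallyCompleteLattice β] {s : Set β}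
    {a b : β} (hne : s.Nonempty) (hs : s ⊆ Icc a b) : sSup s ∈ Icc a b :=
  ⟨hne.elim fun _ hx => le_csSup_of_le ⟨b, fun _ hy => (hs hy).2⟩ hx (hs hx).1,
    csSup_le hne fun _ hy => (hs hy).2⟩

theorem stmt11_general (d k : ℕ) (hd : 1 ≤ d) (hk : k ≤ d - 1)
    (z ε : ℝ) (hz : 1 ≤ z) (hε : ε ∈ Set.Ioc (0 : ℝ) (1 / (2 ^ (z + 1) + 2)))
    (P : Finset (EuclideanSpace ℝ (Fin d))) (hP : P.Nonempty)
    (w : EuclideanSpace ℝ (Fin d) → ℝ) (hw : ∀ q ∈ P, 0 ≤ w q)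
    (hwpos : 0 < ∑ q ∈ P, w q)
    (ψ r c₁ : ℝ) (hψ : ψ = (ε / z) ^ z)
    (hr : r = 1 + P.sup' hP fun q => dist q 0 ^ z / (ψ * ε ^ 2))
    (hc₁ : c₁ = 2 ^ z + 1)
    (p : EuclideanSpace ℝ (Fin d)) (hp : p ∈ P) :
    (1 - c₁ * ε) / (1 + c₁ * ε) * (w p / ∑ q ∈ P, w q) ≤
      sSup {t : ℝ | ∃ S : AffineSubspace ℝ (EuclideanSpace ℝ (Fin d)),
        (S : Set (EuclideanSpace ℝ (Fin d))).Nonempty ∧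
        Module.finrank ℝ S.direction = k ∧
        ε * r ≤ Metric.infDist 0 (S : Set (EuclideanSpace ℝ (Fin d))) ^ z ∧
        0 < (∑ q ∈ P, w q * Metric.infDist q (S : Set (EuclideanSpace ℝ (Fin d))) ^ z) ∧
        t = w p * Metric.infDist p (S : Set (EuclideanSpace ℝ (Fin d))) ^ z /
            ∑ q ∈ P, w q * Metric.infDist q (S : Set (EuclideanSpace ℝ (Fin d))) ^ z} ∧
    sSup {t : ℝ | ∃ S : AffineSubspace ℝ (EuclideanSpace ℝ (Fin d)),
        (S : Set (EuclideanSpace ℝ (Fin d))).Nonempty ∧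
        Module.finrank ℝ S.direction = k ∧
        ε * r ≤ Metric.infDist 0 (S : Set (EuclideanSpace ℝ (Fin d))) ^ z ∧
        0 < (∑ q ∈ P, w q * Metric.infDist q (S : Set (EuclideanSpace ℝ (Fin d))) ^ z) ∧
        t = w p * Metric.infDist p (S : Set (EuclideanSpace ℝ (Fin d))) ^ z /
            ∑ q ∈ P, w q * Metric.infDist q (S : Set (EuclideanSpace ℝ (Fin d))) ^ z} ≤
      (1 + c₁ * ε) / (1 - c₁ * ε) * (w p / ∑ q ∈ P, w q) := by
  subst hψ hc₁
  obtain ⟨hε0, hεle⟩ := hε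
  have hc1 : (2 ^ z + 1) * ε < 1 := by linarith [two_rpow_add_one_mul_le_half hεle]
  have hε1 : ε ≤ 1 := by nlinarith [Real.rpow_nonneg zero_le_two z]
  have hnear : ∀ q ∈ P, dist q 0 ^ z / ((ε / z) ^ z * ε ^ 2) ≤ r - 1 := fun q hq => by
    rw [hr, add_sub_cancel_left]
    exact Finset.le_sup' (fun q => dist q 0 ^ z / ((ε / z) ^ z * ε ^ 2)) hq
  have hεr : 0 < ε * r := by
    have : 0 ≤ dist p 0 ^ z / ((ε / z) ^ z * ε ^ 2) := by positivity
    nlinarith [hnear p hp]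
  have hcost : ∀ S : AffineSubspace ℝ (EuclideanSpace ℝ (Fin d)),
      ε * r ≤ infDist 0 (S : Set (EuclideanSpace ℝ (Fin d))) ^ z →
      ∀ q ∈ P, infDist q (S : Set (EuclideanSpace ℝ (Fin d))) ^ z ∈
        Icc (infDist 0 (S : Set (EuclideanSpace ℝ (Fin d))) ^ z * (1 - (2 ^ z + 1) * ε))
          (infDist 0 (S : Set (EuclideanSpace ℝ (Fin d))) ^ z * (1 + (2 ^ z + 1) * ε)) :=
    fun S hS q hq => infDist_rpow_mem_Icc_of_far hz ⟨hε0, hε1⟩ (hnear q hq) hS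
  obtain ⟨S₀, hS₀, hS₀k, hS₀R⟩ := exists_affineSubspace_finrank_eq_le_infDist
    (E := EuclideanSpace ℝ (Fin d)) (k := k) (by rw [finrank_euclideanSpace_fin]; omega) 0
    ((ε * r) ^ z⁻¹)
  have hS₀far : ε * r ≤ infDist 0 (S₀ : Set (EuclideanSpace ℝ (Fin d))) ^ z :=
    calc ε * r = ((ε * r) ^ z⁻¹) ^ z := (Real.rpow_inv_rpow hεr.le (by linarith)).symm
      _ ≤ _ := Real.rpow_le_rpow (Real.rpow_nonneg hεr.le _) hS₀R (by linarith)
  have hS₀cost : 0 < ∑ q ∈ P, w q * infDist q (S₀ : Set (EuclideanSpace ℝ (Fin d))) ^ z :=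
    (mul_pos hwpos (mul_pos (hεr.trans_le hS₀far) (sub_pos.2 hc1))).trans_le
      (sum_mul_mem_Icc hw (hcost S₀ hS₀far)).1
  refine csSup_mem_Icc_of_subset ⟨_, S₀, hS₀, hS₀k, hS₀far, hS₀cost, rfl⟩ ?_
  rintro _ ⟨S, -, -, hS, -, rfl⟩
  exact mul_div_sum_mul_mem_Icc hw hwpos (hεr.trans_le hS) hc1 (hcost S hS) hp

/-- Let `(P,w)` be a weighted set of `n ≥ 1` points in `ℝ^d` with
positive total weight, `z ≥ 1`, `ε ∈ (0, 1/(2^{z+1}+2)]`, `ψ = (ε/z)^z`,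
`r = 1 + max_{q∈P} dist(q,0)^z/(ψε²)`, `c₁ = 2^z+1`, and let `Q₀` be the set of nonempty
affine `k`-subspaces `S` of `ℝ^d` with `D_z(0,S) ≥ εr`. Then for every `p ∈ P` the
supremum over `S ∈ Q₀` (with nonzero weighted cost) of
`w(p)·D_z(p,S)/Σ_{q∈P} w(q)·D_z(q,S)` lies between
`((1−c₁ε)/(1+c₁ε))·w(p)/Σ_{q∈P} w(q)` and `((1+c₁ε)/(1−c₁ε))·w(p)/Σ_{q∈P} w(q)`. -/
theorem stmt11 (d k n : ℕ) (hd : 1 ≤ d) (hk : k ≤ d - 1) (hn : 1 ≤ n)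
    (z ε : ℝ) (hz : 1 ≤ z) (hε : ε ∈ Set.Ioc (0 : ℝ) (1 / (2 ^ (z + 1) + 2)))
    (P : Finset (EuclideanSpace ℝ (Fin d))) (hP : P.Nonempty) (hcard : P.card = n)
    (w : EuclideanSpace ℝ (Fin d) → ℝ) (hw : ∀ q ∈ P, 0 ≤ w q)
    (hwpos : 0 < ∑ q ∈ P, w q)
    (ψ r c₁ : ℝ) (hψ : ψ = (ε / z) ^ z)
    (hr : r = 1 + P.sup' hP fun q => dist q 0 ^ z / (ψ * ε ^ 2))
    (hc₁ : c₁ = 2 ^ z + 1)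
    (p : EuclideanSpace ℝ (Fin d)) (hp : p ∈ P) :
    (1 - c₁ * ε) / (1 + c₁ * ε) * (w p / ∑ q ∈ P, w q) ≤
      sSup {t : ℝ | ∃ S : AffineSubspace ℝ (EuclideanSpace ℝ (Fin d)),
        (S : Set (EuclideanSpace ℝ (Fin d))).Nonempty ∧
        Module.finrank ℝ S.direction = k ∧
        ε * r ≤ Metric.infDist 0 (S : Set (EuclideanSpace ℝ (Fin d))) ^ z ∧
        0 < (∑ q ∈ P, w q * Metric.infDist q (S : Set (EuclideanSpace ℝ (Fin d))) ^ z) ∧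
        t = w p * Metric.infDist p (S : Set (EuclideanSpace ℝ (Fin d))) ^ z /
            ∑ q ∈ P, w q * Metric.infDist q (S : Set (EuclideanSpace ℝ (Fin d))) ^ z} ∧
    sSup {t : ℝ | ∃ S : AffineSubspace ℝ (EuclideanSpace ℝ (Fin d)),
        (S : Set (EuclideanSpace ℝ (Fin d))).Nonempty ∧
        Module.finrank ℝ S.direction = k ∧
        ε * r ≤ Metric.infDist 0 (S : Set (EuclideanSpace ℝ (Fin d))) ^ z ∧
        0 < (∑ q ∈ P, w q * Metric.infDist q (S : Set (EuclideanSpace ℝ (Fin d))) ^ z) ∧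
        t = w p * Metric.infDist p (S : Set (EuclideanSpace ℝ (Fin d))) ^ z /
            ∑ q ∈ P, w q * Metric.infDist q (S : Set (EuclideanSpace ℝ (Fin d))) ^ z} ≤
      (1 + c₁ * ε) / (1 - c₁ * ε) * (w p / ∑ q ∈ P, w q) :=
  stmt11_general d k hd hk z ε hz hε P hP w hw hwpos ψ r c₁ hψ hr hc₁ p hp
end
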